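/- For every integer s ≥ 2, every positive integer k, and every integer m ≥ s·k, every first-order sentence A in the language of rooted trees of quantifier depth at most k and alternating quantifier depth at most s-1 satisfies: A holds in T_1^{(s,k,m)} if and only if A holds in T_2^{(s,k,m)}. -/

import Mathlib

/-! ## Rooted trees -/

/-- A rooted tree structure: a vertex type, a root, and a parent map
(`parent v = none` is intended to hold exactly when `v` is the root). -/
structure RTree where
  V : Type
  root : V
  parent : V → Option V

namespace RTree

/-- Iterate the parent map `n` times. -/
def parentIter (T : RTree) : ℕ → T.V → Option T.V
  | 0, v => some v
  | n + 1, v => (T.parent v).bind (T.parentIter n)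

/-- `u` is a descendant of `v` (possibly `u = v`). -/
def IsDesc (T : RTree) (v u : T.V) : Prop :=
  ∃ n, T.parentIter n u = some v

/-- The structure is a genuine rooted, locally finite tree:
exactly the root has no parent, every vertex reaches the root by iterating
the parent map (connectivity and acyclicity), and every vertex has finitely
many children (local finiteness). -/
def IsTree (T : RTree) : Prop :=
  (∀ v, T.parent v = none ↔ v = T.root) ∧
  (∀ v, ∃ n, T.parentIter n v = some T.root) ∧
  (∀ v, {u | T.parent u = some v}.Finite)

open Classical in
/-- The subtree `T(v)` consisting of `v` and all its descendants, rooted at `v`. -/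
noncomputable def subtree (T : RTree) (v : T.V) : RTree where
  V := {u : T.V // T.IsDesc v u}
  root := ⟨v, 0, rfl⟩
  parent u :=
    if u.1 = v then none
    else (T.parent u.1).bind fun w =>
      if h : T.IsDesc v w then some ⟨w, h⟩ else none

end RTree

/-- An isomorphism of rooted trees: a bijection of vertices mapping root to
root and commuting with the parent maps. -/
structure TreeIso (S T : RTree) where
  toEquiv : S.V ≃ T.V
  map_root : toEquiv S.root = T.root
  map_parent : ∀ v, (S.parent v).map toEquiv = T.parent (toEquiv v)

/-! ## First-order logic of rooted trees -/

/-- Terms: variables (de Bruijn indices) and the constant `R` for the root. -/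
inductive FOTerm where
  | var : ℕ → FOTerm
  | root : FOTerm
deriving DecidableEq

/-- First-order formulas in the language of rooted trees: equality `x = y`,
the parent relation `parentOf t t'` (meaning `π(t') = t`, i.e. `t` is the
parent of `t'`), Boolean connectives, and quantifiers (de Bruijn style). -/
inductive FOFormula where
  | eq : FOTerm → FOTerm → FOFormula
  | parentOf : FOTerm → FOTerm → FOFormula
  | not : FOFormula → FOFormula
  | and : FOFormula → FOFormula → FOFormula
  | or : FOFormula → FOFormula → FOFormula
  | imp : FOFormula → FOFormula → FOFormula
  | all : FOFormula → FOFormula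
  | ex : FOFormula → FOFormula
deriving DecidableEq

namespace FOTerm

def eval (T : RTree) (env : ℕ → T.V) : FOTerm → T.V
  | var n => env n
  | root => T.root

def freeBound : FOTerm → ℕ
  | var n => n + 1
  | root => 0

end FOTerm

/-- Kinds of quantifiers, used to count alternations. -/
inductive QKind where
  | ex | all
deriving DecidableEq

/-- The dual of a quantifier kind. -/
def QKind.dual : QKind → QKind
  | .ex => .all
  | .all => .ex

namespace FOFormula

/-- Satisfaction of a formula in a rooted tree under an environment. -/
def Sat (T : RTree) : FOFormula → (ℕ → T.V) → Prop
  | eq t₁ t₂, env => t₁.eval T env = t₂.eval T env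
  | parentOf t₁ t₂, env => T.parent (t₂.eval T env) = some (t₁.eval T env)
  | not φ, env => ¬ φ.Sat T env
  | and φ ψ, env => φ.Sat T env ∧ ψ.Sat T env
  | or φ ψ, env => φ.Sat T env ∨ ψ.Sat T env
  | imp φ ψ, env => φ.Sat T env → ψ.Sat T env
  | all φ, env => ∀ w : T.V, φ.Sat T (fun n => match n with | 0 => w | Nat.succ k => env k)
  | ex φ, env => ∃ w : T.V, φ.Sat T (fun n => match n with | 0 => w | Nat.succ k => env k)

/-- Quantifier depth: the maximum number of nested quantifiers. -/
def qd : FOFormula → ℕ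
  | eq _ _ => 0
  | parentOf _ _ => 0
  | not φ => φ.qd
  | and φ ψ => max φ.qd ψ.qd
  | or φ ψ => max φ.qd ψ.qd
  | imp φ ψ => max φ.qd ψ.qd
  | all φ => φ.qd + 1
  | ex φ => φ.qd + 1

/-- Auxiliary alternation count: `aqdAux φ pol q` is the maximum number of
alternations between (effectively) existential and universal quantifiers along
a nested quantifier sequence of `φ`, given the current polarity `pol`
(`true` = positive; negations and antecedents of implications flip it, so that
e.g. a `∀` under a negation counts as an `∃`) and the effective kind `q` of
the innermost enclosing quantifier (if any). -/
def aqdAux : FOFormula → Bool → Option QKind → ℕ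
  | eq _ _, _, _ => 0
  | parentOf _ _, _, _ => 0
  | not φ, pol, q => φ.aqdAux (!pol) q
  | and φ ψ, pol, q => max (φ.aqdAux pol q) (ψ.aqdAux pol q)
  | or φ ψ, pol, q => max (φ.aqdAux pol q) (ψ.aqdAux pol q)
  | imp φ ψ, pol, q => max (φ.aqdAux (!pol) q) (ψ.aqdAux pol q)
  | all φ, pol, q =>
      (if q = some (if pol then QKind.ex else QKind.all) then 1 else 0) +
        φ.aqdAux pol (some (if pol then QKind.all else QKind.ex))
  | ex φ, pol, q =>
      (if q = some (if pol then QKind.all else QKind.ex) then 1 else 0) +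
        φ.aqdAux pol (some (if pol then QKind.ex else QKind.all))

/-- The number of alternations of quantifiers of a formula: the maximum number
of switches between (effectively) existential and universal quantifiers in a
nested quantifier sequence.  Purely existential or purely universal formulas
have `aqd = 0`. -/
def aqd (φ : FOFormula) : ℕ := φ.aqdAux true none

/-- A bound on the free variables of a formula: all free de Bruijn indices
are `< freeBound`. -/
def freeBound : FOFormula → ℕ
  | eq t₁ t₂ => max t₁.freeBound t₂.freeBound
  | parentOf t₁ t₂ => max t₁.freeBound t₂.freeBound
  | not φ => φ.freeBound
  | and φ ψ => max φ.freeBound ψ.freeBound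
  | or φ ψ => max φ.freeBound ψ.freeBound
  | imp φ ψ => max φ.freeBound ψ.freeBound
  | all φ => φ.freeBound - 1
  | ex φ => φ.freeBound - 1

/-- A sentence is a formula with no free variables. -/
def IsSentence (φ : FOFormula) : Prop := φ.freeBound = 0

end FOFormula

/-- A (closed) formula holds in a rooted tree. -/
def Models (T : RTree) (φ : FOFormula) : Prop :=
  φ.Sat T (fun _ => T.root)

/-- The formula `P_i(x)`, with free variable `x` being de Bruijn index `0`:
`P_0(x) = ∀ y ¬(π(y) = x)` and `P_{i+1}(x) = ∀ y (π(y) = x → ¬ P_i(y))`. -/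
def Pform : ℕ → FOFormula
  | 0 => .all (.not (.parentOf (.var 1) (.var 0)))
  | i + 1 => .all (.imp (.parentOf (.var 1) (.var 0)) (.not (Pform i)))

/-- The sentence `KEIN_i = P_i(R)`. -/
def KEIN : ℕ → FOFormula
  | 0 => .all (.not (.parentOf .root (.var 0)))
  | i + 1 => .all (.imp (.parentOf .root (.var 0)) (.not (Pform i)))

/-! ## Ehrenfeucht games -/

/-- The winning condition for Duplicator: for all pairs `(x_i, y_i)`, `(x_j, y_j)`
in the list of selected/designated pairs, (Main 1) `π(x_j) = x_i ↔ π(y_j) = y_i`,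
and (Main 2) `x_i = x_j ↔ y_i = y_j`. -/
def GoodPairs (T₁ T₂ : RTree) (ps : List (T₁.V × T₂.V)) : Prop :=
  ∀ p ∈ ps, ∀ q ∈ ps,
    (T₁.parent p.1 = some q.1 ↔ T₂.parent p.2 = some q.2) ∧
    (p.1 = q.1 ↔ p.2 = q.2)

/-- Duplicator wins the scheduled Ehrenfeucht game on `T₁, T₂` in which Spoiler
must play his moves in consecutive batches, the batch sizes given by the list
`sched`, switching trees after each batch; `side = true` means Spoiler currently
plays on `T₁` (Duplicator answering on `T₂`), `side = false` means Spoiler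
currently plays on `T₂`.  The list `ps` records the pairs selected so far
(including designated pairs and the pair of roots); Duplicator wins when the
final configuration satisfies `GoodPairs`. -/
def DupWinsSched (T₁ T₂ : RTree) : List ℕ → Bool → List (T₁.V × T₂.V) → Prop
  | [], _, ps => GoodPairs T₁ T₂ ps
  | 0 :: rest, side, ps => DupWinsSched T₁ T₂ rest (!side) ps
  | (n + 1) :: rest, side, ps =>
      if side then
        ∀ x : T₁.V, ∃ y : T₂.V, DupWinsSched T₁ T₂ (n :: rest) side ((x, y) :: ps)
      else
        ∀ y : T₂.V, ∃ x : T₁.V, DupWinsSched T₁ T₂ (n :: rest) side ((x, y) :: ps)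
termination_by sched _ _ => (sched.length, sched.sum)
decreasing_by
  all_goals
    first
      | exact Prod.Lex.left _ _ (Nat.lt_succ_self _)
      | exact Prod.Lex.right _ (by simp [List.sum_cons])

/-- The cost (in switches) for Spoiler of playing on side `side` when his
previous move (if any) was on side `last`. -/
def switchCost (last : Option Bool) (side : Bool) : ℕ :=
  match last with
  | none => 0
  | some b => if b = side then 0 else 1

/-- Duplicator wins the Ehrenfeucht game `EHR` with `rounds` remaining rounds,
`sw` remaining switches allowed to Spoiler, `last` the side on which Spoiler
made his previous move (if any), and `ps` the pairs selected so far.  In each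
round Spoiler picks a side (paying a switch if he changes trees, which he may
do only if he has switches left) and a vertex in that tree, and Duplicator
answers in the other tree. -/
def DupWinsEHRAux (T₁ T₂ : RTree) :
    ℕ → ℕ → Option Bool → List (T₁.V × T₂.V) → Prop
  | 0, _, _, ps => GoodPairs T₁ T₂ ps
  | r + 1, sw, last, ps =>
      ∀ side : Bool, switchCost last side ≤ sw →
        if side then
          ∀ x : T₁.V, ∃ y : T₂.V,
            DupWinsEHRAux T₁ T₂ r (sw - switchCost last side) (some side) ((x, y) :: ps)
        else
          ∀ y : T₂.V, ∃ x : T₁.V,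
            DupWinsEHRAux T₁ T₂ r (sw - switchCost last side) (some side) ((x, y) :: ps)

/-- Duplicator wins the game `EHR[T₁, T₂, s, r]`: `r` rounds, Spoiler may start
on either tree and make at most `s` switches. -/
def DupWinsEHR (T₁ T₂ : RTree) (s r : ℕ) : Prop :=
  DupWinsEHRAux T₁ T₂ r s none [(T₁.root, T₂.root)]

/-! ## The trees `T₁^{(s,k,m)}` and `T₂^{(s,k,m)}` -/

/-- The one-vertex rooted tree. -/
def single : RTree where
  V := PUnit
  root := PUnit.unit
  parent := fun _ => none

/-- Hang the trees `f 0, …, f (n-1)` from a new root: the root of each `f i`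
becomes a child of the new root. -/
def hang (n : ℕ) (f : Fin n → RTree) : RTree where
  V := Unit ⊕ (Σ i : Fin n, (f i).V)
  root := Sum.inl ()
  parent := fun x =>
    match x with
    | Sum.inl _ => none
    | Sum.inr ⟨i, w⟩ =>
      match (f i).parent w with
      | none => some (Sum.inl ())
      | some w' => some (Sum.inr ⟨i, w'⟩)

/-- The pair of trees `(T₁^{(s,k,m)}, T₂^{(s,k,m)})`, indexed by `s` (the
parameter `k` plays no role in the construction).  Conventions for `s = 0`:
`T₁^{(0)}` is a single vertex and `T₂^{(0)}` is a star of `m` childless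
children.  For `s ≥ 1`: in `T₁^{(s+1)}` the root has `m+1` children, from each
of which hangs a copy of `T₂^{(s)}`; in `T₂^{(s+1)}` the root has `m+1`
children, from `m` of which hangs a copy of `T₂^{(s)}` and from the remaining
one hangs a copy of `T₁^{(s)}`. -/
def TreePair (m : ℕ) : ℕ → RTree × RTree
  | 0 => (single, hang m fun _ => single)
  | s + 1 =>
      (hang (m + 1) fun _ => (TreePair m s).2,
       hang (m + 1) fun i => if i.1 = m then (TreePair m s).1 else (TreePair m s).2)

/-- The tree `T₁^{(s,k,m)}`. -/
def Tree1 (s k m : ℕ) : RTree := (TreePair m s).1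

/-- The tree `T₂^{(s,k,m)}`. -/
def Tree2 (s k m : ℕ) : RTree := (TreePair m s).2

/-!
Duplicator winning the `k`-round Ehrenfeucht game in which Spoiler may switch trees at most
`s` times implies that no sentence of quantifier depth `≤ k` with `≤ s` alternations
distinguishes the trees: each quantifier is answered by a move, each alternation costs a switch.

Duplicator wins this game on `T₁^{(t+1)}, T₂^{(t+1)}` with `t` switches. By induction on `t`
he even wins on `T₁^{(t)}, T₂^{(t)}` with `t` switches when a first move in `T₂^{(t)}`
already costs one (for `t = 0` Spoiler is confined to the one-vertex tree). Both trees hang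
`m + 1` subtrees from the root, all copies of `T₂^{(t)}` except one copy of `T₁^{(t)}` in
`T₂^{(t+1)}`. Duplicator matches branches as Spoiler enters them (as `m ≥ k`, fresh branches
never run out), copies moves between matched isomorphic branches, and plays the inductive
strategy in the branch pair `(T₂^{(t)}, T₁^{(t)})`. Spoiler can enter that pair only through a
move in `T₂^{(t+1)}`, after which he has at most `t` switches left.
-/

theorem switchCost_le_add (last : Option Bool) (side side' : Bool) :
    switchCost last side' ≤ switchCost last side + switchCost (some side) side' := by
  revert last side side'
  decide

theorem switchCost_map_not (last : Option Bool) (side : Bool) :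
    switchCost (last.map (!·)) side = switchCost last (!side) := by
  revert last side
  decide

/-- Whichever side Spoiler moves to next, he is left with no more switches from `(sw', last')`
than from `(sw, last)`; a negative count means that the move is not allowed. -/
def BudgetLE (sw' : ℕ) (last' : Option Bool) (sw : ℕ) (last : Option Bool) : Prop :=
  ∀ side, (sw' : ℤ) - switchCost last' side ≤ sw - switchCost last side

theorem budgetLE_of_le {sw' sw : ℕ} (last : Option Bool) (h : sw' ≤ sw) :
    BudgetLE sw' last sw last :=
  fun _ => by omega

theorem budgetLE_after_move {sw : ℕ} {last : Option Bool} {side : Bool}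
    (h : switchCost last side ≤ sw) :
    BudgetLE (sw - switchCost last side) (some side) sw last :=
  fun side' => by have := switchCost_le_add last side side'; omega

def GoodPair (T₁ T₂ : RTree) (p q : T₁.V × T₂.V) : Prop :=
  (T₁.parent p.1 = some q.1 ↔ T₂.parent p.2 = some q.2) ∧ (p.1 = q.1 ↔ p.2 = q.2)

section Game

variable {T₁ T₂ : RTree}

theorem GoodPairs.of_cons {p : T₁.V × T₂.V} {ps : List (T₁.V × T₂.V)}
    (h : GoodPairs T₁ T₂ (p :: ps)) : GoodPairs T₁ T₂ ps :=
  fun a ha b hb => h a (.tail _ ha) b (.tail _ hb)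

namespace DupWinsEHRAux

variable {r sw : ℕ} {last : Option Bool} {ps : List (T₁.V × T₂.V)}

theorem respond₁ (h : DupWinsEHRAux T₁ T₂ (r + 1) sw last ps)
    (hc : switchCost last true ≤ sw) (x : T₁.V) :
    ∃ y, DupWinsEHRAux T₁ T₂ r (sw - switchCost last true) (some true) ((x, y) :: ps) :=
  h true hc x

theorem respond₂ (h : DupWinsEHRAux T₁ T₂ (r + 1) sw last ps)
    (hc : switchCost last false ≤ sw) (y : T₂.V) :
    ∃ x, DupWinsEHRAux T₁ T₂ r (sw - switchCost last false) (some false) ((x, y) :: ps) :=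
  h false hc y

theorem of_respond
    (h₁ : switchCost last true ≤ sw → ∀ x, ∃ y,
      DupWinsEHRAux T₁ T₂ r (sw - switchCost last true) (some true) ((x, y) :: ps))
    (h₂ : switchCost last false ≤ sw → ∀ y, ∃ x,
      DupWinsEHRAux T₁ T₂ r (sw - switchCost last false) (some false) ((x, y) :: ps)) :
    DupWinsEHRAux T₁ T₂ (r + 1) sw last ps
  | true, hc => h₁ hc
  | false, hc => h₂ hc

theorem goodPairs :
    ∀ {r sw last ps}, DupWinsEHRAux T₁ T₂ r sw last ps → GoodPairs T₁ T₂ ps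
  | 0, _, _, _, h => h
  | _ + 1, _, none, _, h | _ + 1, _, some true, _, h =>
    (h.respond₁ (Nat.zero_le _) T₁.root).choose_spec.goodPairs.of_cons
  | _ + 1, _, some false, _, h =>
    (h.respond₂ (Nat.zero_le _) T₂.root).choose_spec.goodPairs.of_cons

theorem mono : ∀ {r r' sw sw' : ℕ} {last last' : Option Bool} {ps : List (T₁.V × T₂.V)},
    DupWinsEHRAux T₁ T₂ r sw last ps → r' ≤ r → BudgetLE sw' last' sw last →
      DupWinsEHRAux T₁ T₂ r' sw' last' ps
  | _, 0, _, _, _, _, _, h, _, _ => h.goodPairs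
  | r + 1, r' + 1, sw, sw', last, last', ps, h, hr, hb => by
    refine of_respond (fun hc x => ?_) (fun hc y => ?_)
    · have := hb true
      obtain ⟨y, hy⟩ := h.respond₁ (by omega) x
      exact ⟨y, hy.mono (by omega) (budgetLE_of_le _ (by omega))⟩
    · have := hb false
      obtain ⟨x, hx⟩ := h.respond₂ (by omega) y
      exact ⟨x, hx.mono (by omega) (budgetLE_of_le _ (by omega))⟩

theorem advance (h : DupWinsEHRAux T₁ T₂ (r + 1) sw last ps) {side : Bool}
    (hc : switchCost last side ≤ sw) :
    DupWinsEHRAux T₁ T₂ r (sw - switchCost last side) (some side) ps :=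
  h.mono r.le_succ (budgetLE_after_move hc)

theorem swap : ∀ {r sw last} {ps : List (T₁.V × T₂.V)},
    DupWinsEHRAux T₁ T₂ r sw last ps →
      DupWinsEHRAux T₂ T₁ r sw (last.map (!·)) (ps.map Prod.swap)
  | 0, _, _, _, h => fun _ hp' _ hq' => by
    obtain ⟨p, hp, rfl⟩ := List.mem_map.1 hp'
    obtain ⟨q, hq, rfl⟩ := List.mem_map.1 hq'
    exact ⟨(h p hp q hq).1.symm, (h p hp q hq).2.symm⟩
  | r + 1, sw, last, ps, h => by
    refine of_respond (fun hc x => ?_) (fun hc y => ?_) <;>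
      rw [switchCost_map_not] at hc ⊢
    · obtain ⟨y, hy⟩ := h.respond₂ hc x
      exact ⟨y, hy.swap⟩
    · obtain ⟨x, hx⟩ := h.respond₁ hc y
      exact ⟨x, hx.swap⟩

end DupWinsEHRAux

end Game

/-- The kind of quantifier that a move of Spoiler on side `b` answers, when a formula is
transferred from the first tree to the second. -/
def QKind.ofSide (b : Bool) : QKind := if b then .ex else .all

theorem QKind.ofSide_not (b : Bool) : QKind.ofSide (!b) = (QKind.ofSide b).dual := by
  cases b <;> rfl

theorem ite_ofSide_eq_all (last : Option Bool) :
    (if last.map QKind.ofSide = some .all then 1 else 0) = switchCost last true := by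
  revert last
  decide

theorem ite_ofSide_eq_ex (last : Option Bool) :
    (if last.map QKind.ofSide = some .ex then 1 else 0) = switchCost last false := by
  revert last
  decide

namespace FOFormula

theorem aqdAux_not_dual (φ : FOFormula) :
    ∀ (pol : Bool) (q : Option QKind), φ.aqdAux pol q = φ.aqdAux (!pol) (q.map QKind.dual) := by
  induction φ with
  | eq | parentOf => intros; rfl
  | not φ ih => intro pol q; exact ih (!pol) q
  | and φ ψ ihφ ihψ | or φ ψ ihφ ihψ =>
    intro pol q
    simp only [aqdAux, ihφ pol q, ihψ pol q]
  | imp φ ψ ihφ ihψ =>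
    intro pol q
    simp only [aqdAux, ihφ (!pol) q, ihψ pol q]
  | all φ ih | ex φ ih =>
    intro pol q
    simp only [aqdAux, ih pol]
    cases pol <;> rcases q with _ | ⟨_ | _⟩ <;> rfl

theorem aqdAux_swap (φ : FOFormula) (last : Option Bool) :
    φ.aqdAux true ((last.map (!·)).map QKind.ofSide) =
      φ.aqdAux false (last.map QKind.ofSide) := by
  rw [aqdAux_not_dual φ false, Option.map_map, Option.map_map]
  congr 2
  funext b
  exact QKind.ofSide_not b

theorem _root_.FOTerm.eval_mem {T₁ T₂ : RTree} {ps : List (T₁.V × T₂.V)}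
    {env₁ : ℕ → T₁.V} {env₂ : ℕ → T₂.V} (hroot : (T₁.root, T₂.root) ∈ ps)
    (henv : ∀ n, (env₁ n, env₂ n) ∈ ps) :
    ∀ t : FOTerm, (t.eval T₁ env₁, t.eval T₂ env₂) ∈ ps
  | .var n => henv n
  | .root => hroot

theorem sat_of_dupWinsEHRAux (φ : FOFormula) :
    ∀ {T₁ T₂ : RTree} {r sw : ℕ} {last : Option Bool} {ps : List (T₁.V × T₂.V)}
      {env₁ : ℕ → T₁.V} {env₂ : ℕ → T₂.V},
      DupWinsEHRAux T₁ T₂ r sw last ps → (T₁.root, T₂.root) ∈ ps →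
      (∀ n, (env₁ n, env₂ n) ∈ ps) → φ.qd ≤ r →
      φ.aqdAux true (last.map QKind.ofSide) ≤ sw → φ.Sat T₁ env₁ → φ.Sat T₂ env₂ := by
  induction φ with
  | eq t₁ t₂ =>
    intro _ _ _ _ _ _ _ _ h hroot henv _ _
    exact (h.goodPairs _ (t₁.eval_mem hroot henv) _ (t₂.eval_mem hroot henv)).2.mp
  | parentOf t₁ t₂ =>
    intro _ _ _ _ _ _ _ _ h hroot henv _ _
    exact (h.goodPairs _ (t₂.eval_mem hroot henv) _ (t₁.eval_mem hroot henv)).1.mp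
  | not φ ih =>
    intro _ _ _ _ last _ _ _ h hroot henv hqd haqd hsat hsat'
    -- the negated formula is transferred backwards, along the swapped game
    refine hsat (ih h.swap (List.mem_map_of_mem hroot) (fun n => List.mem_map_of_mem (henv n))
      hqd ?_ hsat')
    rwa [aqdAux_swap]
  | and φ ψ ihφ ihψ =>
    intro _ _ _ _ _ _ _ _ h hroot henv hqd haqd hsat
    simp only [qd, aqdAux, max_le_iff] at hqd haqd
    exact ⟨ihφ h hroot henv hqd.1 haqd.1 hsat.1, ihψ h hroot henv hqd.2 haqd.2 hsat.2⟩
  | or φ ψ ihφ ihψ =>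
    intro _ _ _ _ _ _ _ _ h hroot henv hqd haqd hsat
    simp only [qd, aqdAux, max_le_iff] at hqd haqd
    exact hsat.imp (ihφ h hroot henv hqd.1 haqd.1) (ihψ h hroot henv hqd.2 haqd.2)
  | imp φ ψ ihφ ihψ =>
    intro _ _ _ _ last _ _ _ h hroot henv hqd haqd hsat hsat'
    simp only [qd, aqdAux, max_le_iff] at hqd haqd
    refine ihψ h hroot henv hqd.2 haqd.2 (hsat (ihφ h.swap (List.mem_map_of_mem hroot)
      (fun n => List.mem_map_of_mem (henv n)) hqd.1 ?_ hsat'))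
    rw [aqdAux_swap]
    exact haqd.1
  | all φ ih =>
    intro _ _ r _ last _ _ _ h hroot henv hqd haqd hsat y
    obtain ⟨r, rfl⟩ : ∃ r', r = r' + 1 := ⟨r - 1, by simp only [qd] at hqd; omega⟩
    simp only [qd, aqdAux, ite_true, ite_ofSide_eq_ex] at hqd haqd
    obtain ⟨x, hx⟩ := h.respond₂ (by omega) y
    refine ih hx (.tail _ hroot) (fun n => ?_) (by omega) (by exact Nat.le_sub_of_add_le' haqd)
      (hsat x)
    cases n
    exacts [.head _, .tail _ (henv _)]
  | ex φ ih =>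
    intro _ _ r _ last _ _ _ h hroot henv hqd haqd ⟨x, hsat⟩
    obtain ⟨r, rfl⟩ : ∃ r', r = r' + 1 := ⟨r - 1, by simp only [qd] at hqd; omega⟩
    simp only [qd, aqdAux, ite_true, ite_ofSide_eq_all] at hqd haqd
    obtain ⟨y, hy⟩ := h.respond₁ (by omega) x
    refine ⟨y, ih hy (.tail _ hroot) (fun n => ?_) (by omega)
      (by exact Nat.le_sub_of_add_le' haqd) hsat⟩
    cases n
    exacts [.head _, .tail _ (henv _)]

end FOFormula

theorem models_iff_of_dupWinsEHR {T₁ T₂ : RTree} {s k : ℕ} (h : DupWinsEHR T₁ T₂ s k)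
    {A : FOFormula} (hqd : A.qd ≤ k) (haqd : A.aqd ≤ s) : Models T₁ A ↔ Models T₂ A :=
  ⟨A.sat_of_dupWinsEHRAux h (.head _) (fun _ => .head _) hqd haqd,
    A.sat_of_dupWinsEHRAux h.swap (.head _) (fun _ => .head _) hqd haqd⟩

def RTree.OrphanIffRoot (T : RTree) : Prop :=
  ∀ v, T.parent v = none ↔ v = T.root

theorem GoodPair.parent_eq_none_iff {C D : RTree} (hC : C.OrphanIffRoot) (hD : D.OrphanIffRoot)
    {c : C.V} {d : D.V} (h : GoodPair C D (c, d) (C.root, D.root)) :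
    C.parent c = none ↔ D.parent d = none := by
  rw [hC, hD]
  exact h.2

namespace TreeIso

def refl (T : RTree) : TreeIso T T :=
  ⟨Equiv.refl _, rfl, fun _ => by simp⟩

def ofEq {S T : RTree} (h : S = T) : TreeIso S T :=
  h ▸ refl S

theorem parent_symm {S T : RTree} (e : TreeIso S T) (c : T.V) :
    S.parent (e.toEquiv.symm c) = (T.parent c).map e.toEquiv.symm := by
  rw [← e.toEquiv.apply_symm_apply c, ← e.map_parent, Option.map_map,
    e.toEquiv.symm_comp_self, Option.map_id, Equiv.apply_symm_apply]
  rfl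

end TreeIso

section Hang

variable {n : ℕ} {f : Fin n → RTree} {E E' : RTree}

theorem single_orphanIffRoot : single.OrphanIffRoot :=
  fun _ => iff_of_true rfl rfl

theorem hang_orphanIffRoot : (hang n f).OrphanIffRoot
  | .inl () => iff_of_true rfl rfl
  | .inr ⟨i, w⟩ => by
    simp only [hang]
    split <;> simp

def hangVertex (i : Fin n) (e : TreeIso (f i) E) (c : E.V) : (hang n f).V :=
  .inr ⟨i, e.toEquiv.symm c⟩

variable {i i' : Fin n} {e : TreeIso (f i) E} {c c' : E.V}

theorem hangVertex_ne_root : hangVertex i e c ≠ (hang n f).root :=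
  Sum.inr_ne_inl

theorem branch_eq_of_hangVertex_eq {e' : TreeIso (f i') E'} {c' : E'.V}
    (h : hangVertex i e c = hangVertex i' e' c') : i = i' :=
  (Sigma.mk.inj_iff.mp (Sum.inr.inj h)).1

theorem hangVertex_inj : hangVertex i e c = hangVertex i e c' ↔ c = c' :=
  ⟨fun h => e.toEquiv.symm.injective (eq_of_heq (Sigma.mk.inj_iff.mp (Sum.inr.inj h)).2),
    congrArg _⟩

theorem parent_hangVertex : (hang n f).parent (hangVertex i e c) =
    (E.parent c).elim (some (hang n f).root) (fun c' => some (hangVertex i e c')) := by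
  simp only [hangVertex, hang, e.parent_symm]
  cases E.parent c <;> rfl

theorem parent_hangVertex_eq_root :
    (hang n f).parent (hangVertex i e c) = some (hang n f).root ↔ E.parent c = none := by
  rw [parent_hangVertex]
  cases E.parent c <;> simp [hangVertex_ne_root]

theorem parent_hangVertex_eq_hangVertex :
    (hang n f).parent (hangVertex i e c) = some (hangVertex i e c') ↔ E.parent c = some c' := by
  rw [parent_hangVertex]
  cases E.parent c <;> simp [hangVertex_ne_root.symm, hangVertex_inj]

theorem parent_hangVertex_ne_of_ne {e' : TreeIso (f i') E'} {c' : E'.V} (h : i ≠ i') :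
    (hang n f).parent (hangVertex i e c) ≠ some (hangVertex i' e' c') := by
  rw [parent_hangVertex]
  cases E.parent c <;> simp only [Option.elim, ne_eq, Option.some.injEq]
  · exact hangVertex_ne_root.symm
  · exact fun h' => h (branch_eq_of_hangVertex_eq h')

end Hang

section HangPair

variable {n : ℕ} {f g : Fin n → RTree} {E₁ E₂ E₁' E₂' : RTree} {i i' j j' : Fin n}
  {e₁ : TreeIso (f i) E₁} {e₂ : TreeIso (g j) E₂} {c₁ : E₁.V} {c₂ : E₂.V}

theorem goodPair_hang_root_root :
    GoodPair (hang n f) (hang n g) ((hang n f).root, (hang n g).root)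
      ((hang n f).root, (hang n g).root) :=
  ⟨iff_of_false nofun nofun, iff_of_true rfl rfl⟩

theorem goodPair_hang_root_hangVertex :
    GoodPair (hang n f) (hang n g) ((hang n f).root, (hang n g).root)
      (hangVertex i e₁ c₁, hangVertex j e₂ c₂) :=
  ⟨iff_of_false nofun nofun, iff_of_false hangVertex_ne_root.symm hangVertex_ne_root.symm⟩

theorem goodPair_hang_hangVertex_root (h : E₁.parent c₁ = none ↔ E₂.parent c₂ = none) :
    GoodPair (hang n f) (hang n g) (hangVertex i e₁ c₁, hangVertex j e₂ c₂)
      ((hang n f).root, (hang n g).root) :=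
  ⟨by simpa only [parent_hangVertex_eq_root] using h,
    iff_of_false hangVertex_ne_root hangVertex_ne_root⟩

theorem goodPair_hang_of_ne {e₁' : TreeIso (f i') E₁'} {e₂' : TreeIso (g j') E₂'}
    {c₁' : E₁'.V} {c₂' : E₂'.V} (hi : i ≠ i') (hj : j ≠ j') :
    GoodPair (hang n f) (hang n g) (hangVertex i e₁ c₁, hangVertex j e₂ c₂)
      (hangVertex i' e₁' c₁', hangVertex j' e₂' c₂') :=
  ⟨iff_of_false (parent_hangVertex_ne_of_ne hi) (parent_hangVertex_ne_of_ne hj),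
    iff_of_false (mt branch_eq_of_hangVertex_eq hi) (mt branch_eq_of_hangVertex_eq hj)⟩

theorem goodPair_hang_of_goodPair {c₁' : E₁.V} {c₂' : E₂.V}
    (h : GoodPair E₁ E₂ (c₁, c₂) (c₁', c₂')) :
    GoodPair (hang n f) (hang n g) (hangVertex i e₁ c₁, hangVertex j e₂ c₂)
      (hangVertex i e₁ c₁', hangVertex j e₂ c₂') := by
  simpa only [GoodPair, parent_hangVertex_eq_hangVertex, hangVertex_inj] using h

end HangPair

theorem List.exists_notMem_of_length_lt_card {α : Type*} [Fintype α] (l : List α)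
    (h : l.length < Fintype.card α) : ∃ a, a ∉ l :=
  Cardinal.exists_notMem_of_length_lt l (by simpa using h)

section HangStrategy

variable {n : ℕ} {C D : RTree} {g : Fin n → RTree} {j₀ : Fin n}
  (isoG : ∀ j : {j // j ≠ j₀}, TreeIso (g j) C) (isoG0 : TreeIso (g j₀) D)

/-- The pairs of Duplicator's strategy on `hang n (fun _ => C)` and `hang n g`: the roots,
equal vertices of `C` in matched regular branches `a ∈ M`, and the pairs of the position `inn`
of the game on `(C, D)` in the branch `df` matched with the defect branch `j₀`. -/
def HangDescr (M : List (Fin n × {j // j ≠ j₀})) (df : Option (Fin n))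
    (inn : List (C.V × D.V)) (p : (hang n fun _ => C).V × (hang n g).V) : Prop :=
  p = ((hang n fun _ => C).root, (hang n g).root) ∨
  (∃ a ∈ M, ∃ c, p = (hangVertex a.1 (TreeIso.refl C) c, hangVertex a.2 (isoG a.2) c)) ∨
  (∃ i ∈ df, ∃ cd ∈ inn,
    p = (hangVertex i (TreeIso.refl C) cd.1, hangVertex j₀ isoG0 cd.2))

/-- Before the defect branch is entered, Duplicator can answer the first move into it, which
Spoiler makes in the second tree; afterwards he wins the game on `(C, D)` from `inn` with the
switches left in the whole game. -/
def DefectReady (r sw : ℕ) (last : Option Bool) : Option (Fin n) → List (C.V × D.V) → Prop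
  | none, _ => DupWinsEHRAux C D r (sw - switchCost last false) (some false) [(C.root, D.root)]
  | some _, inn => DupWinsEHRAux C D r sw last (inn ++ [(C.root, D.root)])

theorem DefectReady.step {r sw : ℕ} {last : Option Bool} {df : Option (Fin n)}
    {inn : List (C.V × D.V)} (h : DefectReady (r + 1) sw last df inn) {side : Bool}
    (hc : switchCost last side ≤ sw) :
    DefectReady r (sw - switchCost last side) (some side) df inn := by
  cases df with
  | none =>
    have := switchCost_le_add last side false
    exact DupWinsEHRAux.mono h r.le_succ (budgetLE_of_le _ (by omega))
  | some _ => exact DupWinsEHRAux.advance h hc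

structure HangInv (r sw : ℕ) (last : Option Bool)
    (ps : List ((hang n fun _ => C).V × (hang n g).V)) (M : List (Fin n × {j // j ≠ j₀}))
    (df : Option (Fin n)) (inn : List (C.V × D.V)) : Prop where
  descr : ∀ p ∈ ps, HangDescr isoG isoG0 M df inn p
  nodup_fst : (M.map Prod.fst).Nodup
  nodup_snd : (M.map Prod.snd).Nodup
  defect_fresh : ∀ i ∈ df, i ∉ M.map Prod.fst
  length_lt : M.length + r < n
  ready : DefectReady r sw last df inn

variable {isoG isoG0} {r sw : ℕ} {last : Option Bool}
  {ps : List ((hang n fun _ => C).V × (hang n g).V)} {M : List (Fin n × {j // j ≠ j₀})}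
  {df : Option (Fin n)} {inn : List (C.V × D.V)}

theorem HangDescr.mono {M' : List (Fin n × {j // j ≠ j₀})} {df' : Option (Fin n)}
    {inn' : List (C.V × D.V)} (hM : M ⊆ M') (hdf : ∀ i ∈ df, i ∈ df' ∧ inn ⊆ inn')
    {p : (hang n fun _ => C).V × (hang n g).V} (h : HangDescr isoG isoG0 M df inn p) :
    HangDescr isoG isoG0 M' df' inn' p := by
  rcases h with h | ⟨a, ha, c, h⟩ | ⟨i, hi, cd, hcd, h⟩
  exacts [.inl h, .inr (.inl ⟨a, hM ha, c, h⟩),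
    .inr (.inr ⟨i, (hdf i hi).1, cd, (hdf i hi).2 hcd, h⟩)]

theorem HangInv.goodPair (hC : C.OrphanIffRoot) (hD : D.OrphanIffRoot)
    (h : HangInv isoG isoG0 r sw last ps M df inn)
    (hinn : ∀ i ∈ df, GoodPairs C D (inn ++ [(C.root, D.root)]))
    {p q : (hang n fun _ => C).V × (hang n g).V} (hp : p ∈ ps) (hq : q ∈ ps) :
    GoodPair (hang n fun _ => C) (hang n g) p q := by
  have fst_ne {a b} (ha : a ∈ M) (hb : b ∈ M) (hab : a ≠ b) : a.1 ≠ b.1 :=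
    fun h' => hab (List.inj_on_of_nodup_map h.nodup_fst ha hb h')
  have snd_ne {a b} (ha : a ∈ M) (hb : b ∈ M) (hab : a ≠ b) : a.2.1 ≠ b.2.1 :=
    fun h' => hab (List.inj_on_of_nodup_map h.nodup_snd ha hb (Subtype.ext h'))
  have defect_ne {a i} (ha : a ∈ M) (hi : i ∈ df) : a.1 ≠ i :=
    fun h' => h.defect_fresh i hi (h' ▸ List.mem_map_of_mem ha)
  have mem_inn {cd} (hcd : cd ∈ inn) : cd ∈ inn ++ [(C.root, D.root)] :=
    List.mem_append_left _ hcd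
  have mem_root : (C.root, D.root) ∈ inn ++ [(C.root, D.root)] :=
    List.mem_append_right _ (List.mem_singleton_self _)
  rcases h.descr p hp with rfl | ⟨a, ha, c, rfl⟩ | ⟨i, hi, cd, hcd, rfl⟩ <;>
    rcases h.descr q hq with rfl | ⟨b, hb, c', rfl⟩ | ⟨i', hi', cd', hcd', rfl⟩
  · exact goodPair_hang_root_root
  · exact goodPair_hang_root_hangVertex
  · exact goodPair_hang_root_hangVertex
  · exact goodPair_hang_hangVertex_root Iff.rfl
  · by_cases hab : a = b
    · subst hab
      exact goodPair_hang_of_goodPair ⟨Iff.rfl, Iff.rfl⟩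
    · exact goodPair_hang_of_ne (fst_ne ha hb hab) (snd_ne ha hb hab)
  · exact goodPair_hang_of_ne (defect_ne ha hi') a.2.2
  · exact goodPair_hang_hangVertex_root
      (GoodPair.parent_eq_none_iff hC hD (hinn i hi _ (mem_inn hcd) _ mem_root))
  · exact goodPair_hang_of_ne (defect_ne hb hi).symm (Ne.symm b.2.2)
  · obtain rfl := Option.mem_unique hi hi'
    exact goodPair_hang_of_goodPair (hinn i hi _ (mem_inn hcd) _ (mem_inn hcd'))

variable {side : Bool}

theorem HangInv.step_root (h : HangInv isoG isoG0 (r + 1) sw last ps M df inn)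
    (hc : switchCost last side ≤ sw) :
    HangInv isoG isoG0 r (sw - switchCost last side) (some side)
      (((hang n fun _ => C).root, (hang n g).root) :: ps) M df inn where
  descr := List.forall_mem_cons.2 ⟨.inl rfl, h.descr⟩
  nodup_fst := h.nodup_fst
  nodup_snd := h.nodup_snd
  defect_fresh := h.defect_fresh
  length_lt := by have := h.length_lt; omega
  ready := h.ready.step hc

theorem HangInv.step_regular (h : HangInv isoG isoG0 (r + 1) sw last ps M df inn)
    (hc : switchCost last side ≤ sw) {a : Fin n × {j // j ≠ j₀}} (ha : a ∈ M) (c : C.V) :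
    HangInv isoG isoG0 r (sw - switchCost last side) (some side)
      ((hangVertex a.1 (TreeIso.refl C) c, hangVertex a.2 (isoG a.2) c) :: ps) M df inn where
  descr := List.forall_mem_cons.2 ⟨.inr (.inl ⟨a, ha, c, rfl⟩), h.descr⟩
  nodup_fst := h.nodup_fst
  nodup_snd := h.nodup_snd
  defect_fresh := h.defect_fresh
  length_lt := by have := h.length_lt; omega
  ready := h.ready.step hc

theorem HangInv.step_newRegular (h : HangInv isoG isoG0 (r + 1) sw last ps M df inn)
    (hc : switchCost last side ≤ sw) {i : Fin n} {j : {j // j ≠ j₀}}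
    (hi : i ∉ df.toList ++ M.map Prod.fst) (hj : j ∉ M.map Prod.snd) (c : C.V) :
    HangInv isoG isoG0 r (sw - switchCost last side) (some side)
      ((hangVertex i (TreeIso.refl C) c, hangVertex j (isoG j) c) :: ps) ((i, j) :: M) df inn where
  descr := List.forall_mem_cons.2 ⟨.inr (.inl ⟨(i, j), .head _, c, rfl⟩),
    fun p hp => (h.descr p hp).mono (List.subset_cons_self _ _)
      fun _ hi => ⟨hi, List.Subset.refl _⟩⟩
  nodup_fst := List.nodup_cons.2 ⟨fun h' => hi (List.mem_append_right _ h'), h.nodup_fst⟩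
  nodup_snd := List.nodup_cons.2 ⟨hj, h.nodup_snd⟩
  defect_fresh i₀ hi₀ := by
    rintro (_ | ⟨_, h'⟩)
    · exact hi (List.mem_append_left _ (Option.mem_toList.2 hi₀))
    · exact h.defect_fresh i₀ hi₀ h'
  length_lt := by have := h.length_lt; simp only [List.length_cons]; omega
  ready := h.ready.step hc

theorem HangInv.step_defect {i : Fin n}
    (h : HangInv isoG isoG0 (r + 1) sw last ps M (some i) inn) {c : C.V} {d : D.V}
    (hcd : DupWinsEHRAux C D r (sw - switchCost last side) (some side)
      ((c, d) :: inn ++ [(C.root, D.root)])) :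
    HangInv isoG isoG0 r (sw - switchCost last side) (some side)
      ((hangVertex i (TreeIso.refl C) c, hangVertex j₀ isoG0 d) :: ps) M (some i)
      ((c, d) :: inn) where
  descr := List.forall_mem_cons.2 ⟨.inr (.inr ⟨i, rfl, (c, d), .head _, rfl⟩),
    fun p hp => (h.descr p hp).mono (List.Subset.refl _)
      fun _ hi => ⟨hi, List.subset_cons_self _ _⟩⟩
  nodup_fst := h.nodup_fst
  nodup_snd := h.nodup_snd
  defect_fresh := h.defect_fresh
  length_lt := by have := h.length_lt; omega
  ready := hcd

theorem HangInv.step_newDefect (h : HangInv isoG isoG0 (r + 1) sw last ps M none inn)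
    {i : Fin n} (hi : i ∉ M.map Prod.fst) {c : C.V} {d : D.V}
    (hcd : DupWinsEHRAux C D r (sw - switchCost last false) (some false)
      [(c, d), (C.root, D.root)]) :
    HangInv isoG isoG0 r (sw - switchCost last false) (some false)
      ((hangVertex i (TreeIso.refl C) c, hangVertex j₀ isoG0 d) :: ps) M (some i) [(c, d)] where
  descr := List.forall_mem_cons.2 ⟨.inr (.inr ⟨i, rfl, (c, d), .head _, rfl⟩),
    fun p hp => (h.descr p hp).mono (List.Subset.refl _)
      fun _ hi => absurd hi (Option.not_mem_none _)⟩
  nodup_fst := h.nodup_fst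
  nodup_snd := h.nodup_snd
  defect_fresh _ hi' := Option.mem_some_iff.1 hi' ▸ hi
  length_lt := by have := h.length_lt; omega
  ready := hcd

theorem HangInv.respond₁ (h : HangInv isoG isoG0 (r + 1) sw last ps M df inn)
    (hc : switchCost last true ≤ sw) (x : (hang n fun _ => C).V) :
    ∃ y M' df' inn', HangInv isoG isoG0 r (sw - switchCost last true) (some true)
      ((x, y) :: ps) M' df' inn' := by
  rcases x with ⟨⟩ | ⟨i, c⟩
  · exact ⟨_, _, _, _, h.step_root hc⟩
  by_cases hdf : i ∈ df
  · obtain rfl : df = some i := hdf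
    obtain ⟨d, hd⟩ := DupWinsEHRAux.respond₁ h.ready hc c
    exact ⟨_, _, _, _, h.step_defect hd⟩
  by_cases hM : i ∈ M.map Prod.fst
  · obtain ⟨a, ha, rfl⟩ := List.mem_map.1 hM
    exact ⟨_, _, _, _, h.step_regular hc ha c⟩
  obtain ⟨j, hj⟩ := (M.map Prod.snd).exists_notMem_of_length_lt_card
    (by have := h.length_lt; simp; omega)
  refine ⟨_, _, _, _, h.step_newRegular hc ?_ hj c⟩
  simp only [List.mem_append, Option.mem_toList]
  tauto

theorem HangInv.respond₂ (h : HangInv isoG isoG0 (r + 1) sw last ps M df inn)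
    (hc : switchCost last false ≤ sw) (y : (hang n g).V) :
    ∃ x M' df' inn', HangInv isoG isoG0 r (sw - switchCost last false) (some false)
      ((x, y) :: ps) M' df' inn' := by
  rcases y with ⟨⟩ | ⟨j, w⟩
  · exact ⟨_, _, _, _, h.step_root hc⟩
  by_cases hj : j = j₀
  · subst hj
    obtain ⟨d, rfl⟩ : ∃ d, w = isoG0.toEquiv.symm d :=
      ⟨_, (isoG0.toEquiv.symm_apply_apply w).symm⟩
    rcases df with _ | i
    · obtain ⟨i, hi⟩ := (M.map Prod.fst).exists_notMem_of_length_lt_card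
        (by have := h.length_lt; simp; omega)
      obtain ⟨c, hcd⟩ := DupWinsEHRAux.respond₂ h.ready (Nat.zero_le _) d
      exact ⟨_, _, _, _, h.step_newDefect hi hcd⟩
    · obtain ⟨c, hcd⟩ := DupWinsEHRAux.respond₂ h.ready hc d
      exact ⟨_, _, _, _, h.step_defect hcd⟩
  obtain ⟨j, rfl⟩ : ∃ j' : {j // j ≠ j₀}, j'.1 = j := ⟨⟨j, hj⟩, rfl⟩
  obtain ⟨c, rfl⟩ : ∃ c, w = (isoG j).toEquiv.symm c :=
    ⟨_, ((isoG j).toEquiv.symm_apply_apply w).symm⟩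
  by_cases hM : j ∈ M.map Prod.snd
  · obtain ⟨a, ha, rfl⟩ := List.mem_map.1 hM
    exact ⟨_, _, _, _, h.step_regular hc ha c⟩
  obtain ⟨i, hi⟩ := (df.toList ++ M.map Prod.fst).exists_notMem_of_length_lt_card
    (by have := h.length_lt; cases df <;> simp <;> omega)
  exact ⟨_, _, _, _, h.step_newRegular hc hi hM c⟩

theorem HangInv.dupWinsEHRAux (hC : C.OrphanIffRoot) (hD : D.OrphanIffRoot) :
    ∀ {r sw last ps M df inn}, HangInv isoG isoG0 r sw last ps M df inn →
      DupWinsEHRAux (hang n fun _ => C) (hang n g) r sw last ps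
  | 0, _, _, _, _, df, _, h => fun _ hp _ hq => h.goodPair hC hD
      (fun i hi => by obtain rfl : df = some i := hi; exact h.ready) hp hq
  | _ + 1, _, _, _, _, _, _, h => DupWinsEHRAux.of_respond
      (fun hc x => let ⟨y, _, _, _, h'⟩ := h.respond₁ hc x; ⟨y, h'.dupWinsEHRAux hC hD⟩)
      (fun hc y => let ⟨x, _, _, _, h'⟩ := h.respond₂ hc y; ⟨x, h'.dupWinsEHRAux hC hD⟩)

end HangStrategy

theorem dupWinsEHRAux_hang {n r sw : ℕ} {last : Option Bool} {C D : RTree} {g : Fin n → RTree}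
    {j₀ : Fin n} (isoG : ∀ j : {j // j ≠ j₀}, TreeIso (g j) C) (isoG0 : TreeIso (g j₀) D)
    (hC : C.OrphanIffRoot) (hD : D.OrphanIffRoot) (hr : r < n)
    (hready : DupWinsEHRAux C D r (sw - switchCost last false) (some false)
      [(C.root, D.root)]) :
    DupWinsEHRAux (hang n fun _ => C) (hang n g) r sw last
      [((hang n fun _ => C).root, (hang n g).root)] :=
  HangInv.dupWinsEHRAux hC hD (isoG := isoG) (isoG0 := isoG0) (M := []) (df := none) (inn := [])
    { descr := fun _ hp => .inl (List.mem_singleton.1 hp)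
      nodup_fst := List.nodup_nil
      nodup_snd := List.nodup_nil
      defect_fresh := fun _ hi => absurd hi (Option.not_mem_none _)
      length_lt := by simpa using hr
      ready := hready }

theorem dupWinsEHRAux_single {T : RTree} (hT : T.parent T.root = none) :
    ∀ {r : ℕ} {ps : List (single.V × T.V)}, (∀ p ∈ ps, p = (single.root, T.root)) →
      DupWinsEHRAux single T r 0 (some true) ps
  | 0, _, hps => fun p hp q hq => by
    rw [hps p hp, hps q hq]
    exact ⟨iff_of_false nofun (by simp [hT]), iff_of_true rfl rfl⟩
  | _ + 1, _, hps => DupWinsEHRAux.of_respond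
    (fun _ _ => ⟨T.root, dupWinsEHRAux_single hT (List.forall_mem_cons.2 ⟨rfl, hps⟩)⟩)
    (fun hc => absurd hc (by decide))

theorem treePair_orphanIffRoot (m : ℕ) :
    ∀ t, (TreePair m t).1.OrphanIffRoot ∧ (TreePair m t).2.OrphanIffRoot
  | 0 => ⟨single_orphanIffRoot, hang_orphanIffRoot⟩
  | _ + 1 => ⟨hang_orphanIffRoot, hang_orphanIffRoot⟩

theorem treePair_dupWinsEHRAux (m : ℕ) : ∀ t r, r ≤ m →
    DupWinsEHRAux (TreePair m t).1 (TreePair m t).2 r t (some true)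
      [((TreePair m t).1.root, (TreePair m t).2.root)]
  | 0, _, _ => dupWinsEHRAux_single rfl fun _ hp => List.mem_singleton.1 hp
  | t + 1, r, hr => dupWinsEHRAux_hang (j₀ := Fin.last m)
      (fun j => TreeIso.ofEq (if_neg fun h => j.2 (Fin.ext h))) (TreeIso.ofEq (if_pos rfl))
      (treePair_orphanIffRoot m t).2 (treePair_orphanIffRoot m t).1 (Nat.lt_succ_of_le hr)
      (treePair_dupWinsEHRAux m t r hr).swap

theorem dupWinsEHR_tree1_tree2 {t k m : ℕ} (hkm : k ≤ m) :
    DupWinsEHR (Tree1 (t + 1) k m) (Tree2 (t + 1) k m) t k :=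
  (treePair_dupWinsEHRAux m (t + 1) k hkm).mono le_rfl fun side => by
    cases side <;> simp [switchCost]

theorem trees_agree_on_low_sentences_general (s k m : ℕ) (hs : 2 ≤ s)
    (hm : s * k ≤ m) :
    ∀ A : FOFormula, A.IsSentence → A.qd ≤ k → A.aqd ≤ s - 1 →
      (Models (Tree1 s k m) A ↔ Models (Tree2 s k m) A) := by
  intro A _ hqd haqd
  obtain ⟨t, rfl⟩ : ∃ t, s = t + 1 := ⟨s - 1, by omega⟩
  have hkm : k ≤ m := le_trans (Nat.le_mul_of_pos_left k (by omega)) hm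
  exact models_iff_of_dupWinsEHR (dupWinsEHR_tree1_tree2 hkm) hqd haqd

/-- For every `s ≥ 2`, positive `k` and `m ≥ s·k`, every
first-order sentence of quantifier depth at most `k` and alternating
quantifier depth at most `s - 1` holds in `T₁^{(s,k,m)}` iff it holds in
`T₂^{(s,k,m)}`. -/
theorem trees_agree_on_low_sentences (s k m : ℕ) (hs : 2 ≤ s) (hk : 0 < k)
    (hm : s * k ≤ m) :
    ∀ A : FOFormula, A.IsSentence → A.qd ≤ k → A.aqd ≤ s - 1 →
      (Models (Tree1 s k m) A ↔ Models (Tree2 s k m) A) :=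
  trees_agree_on_low_sentences_general s k m hs hm
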